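/- arXiv:1708.06880 — 2 statements merged into one kernel-verified Lean document; each statement's English description precedes it below -/
import Mathlib

section
/- For all λ, μ ∈ ℂ not both zero, the cubic f = λ·xyz + μ·(x³+y³+z³) has moment matrix m(f) = 0. -/
/-! The partial derivative `∂ᵢf` of `f = λxyz + μ(x³ + y³ + z³)` is `λ` times the product of the
two other variables plus `3μxᵢ²`. Distinct partials therefore share no monomial and are orthogonal,
while each has squared norm `|λ|²/2 + 9|μ|² = 3‖f‖²`. Hence `H(f) = I`, i.e. `m(f) = 0`. -/

open MvPolynomial Matrix

noncomputable section

/-- weight of a monomial exponent: α₁!⋯αₙ!/d! -/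
def mwt (d : ℕ) {n : ℕ} (α : Fin n →₀ ℕ) : ℝ :=
  (∏ i, ((α i).factorial : ℝ)) / (d.factorial : ℝ)

/-- the SU(n)-invariant Hermitian product on degree-d forms -/
def herm (d : ℕ) {n : ℕ} (f g : MvPolynomial (Fin n) ℂ) : ℂ :=
  ∑ α ∈ f.support ∪ g.support,
    (starRingEnd ℂ) (coeff α f) * coeff α g * (mwt d α : ℂ)

/-- H(f)ʲᵢ = (1/(d‖f‖²)) ⟨∂f/∂xⱼ, ∂f/∂xᵢ⟩ -/
def Hmat (n d : ℕ) (f : MvPolynomial (Fin n) ℂ) : Matrix (Fin n) (Fin n) ℂ :=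
  fun i j => (1 / (d * herm d f f)) * herm (d - 1) (pderiv j f) (pderiv i f)

/-- moment matrix m(f) = 2(H(f) − (d/n)I) -/
def moment (n d : ℕ) (f : MvPolynomial (Fin n) ℂ) : Matrix (Fin n) (Fin n) ℂ :=
  (2 : ℂ) • (Hmat n d f - ((d : ℂ) / n) • (1 : Matrix (Fin n) (Fin n) ℂ))

/-- square length ‖m(f)‖² = Re Tr(m(f)·m(f)) -/
def sqLen (n d : ℕ) (f : MvPolynomial (Fin n) ℂ) : ℝ :=
  (Matrix.trace (moment n d f * moment n d f)).re

/-- linear substitution action (A.f)(X) = f(A·X) -/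
def act (n : ℕ) (A : Matrix (Fin n) (Fin n) ℂ) (f : MvPolynomial (Fin n) ℂ) :
    MvPolynomial (Fin n) ℂ :=
  aeval (fun i => ∑ j, A i j • X j) f

end

open Finsupp

section HermitianProduct

variable {n : ℕ} (d : ℕ)

lemma herm_eq_sum_of_subset {f g : MvPolynomial (Fin n) ℂ} {S : Finset (Fin n →₀ ℕ)}
    (hf : f.support ⊆ S) (hg : g.support ⊆ S) :
    herm d f g = ∑ α ∈ S, (starRingEnd ℂ) (coeff α f) * coeff α g * (mwt d α : ℂ) := by
  refine Finset.sum_subset (Finset.union_subset hf hg) fun α _ hα => ?_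
  simp only [Finset.mem_union, MvPolynomial.mem_support_iff, not_or, not_not] at hα
  simp [hα.1]

lemma herm_add_left (f g h : MvPolynomial (Fin n) ℂ) :
    herm d (f + g) h = herm d f h + herm d g h := by
  have hS : f.support ∪ g.support ⊆ f.support ∪ g.support ∪ h.support :=
    Finset.subset_union_left
  rw [herm_eq_sum_of_subset d (MvPolynomial.support_add.trans hS) Finset.subset_union_right,
    herm_eq_sum_of_subset d (Finset.subset_union_left.trans hS) Finset.subset_union_right,
    herm_eq_sum_of_subset d (Finset.subset_union_right.trans hS) Finset.subset_union_right,
    ← Finset.sum_add_distrib]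
  refine Finset.sum_congr rfl fun α _ => ?_
  simp only [coeff_add, map_add]
  ring

lemma herm_add_right (f g h : MvPolynomial (Fin n) ℂ) :
    herm d f (g + h) = herm d f g + herm d f h := by
  have hS : g.support ∪ h.support ⊆ f.support ∪ g.support ∪ h.support := by
    rw [Finset.union_assoc]; exact Finset.subset_union_right
  rw [herm_eq_sum_of_subset d (Finset.subset_union_left.trans Finset.subset_union_left)
      (MvPolynomial.support_add.trans hS),
    herm_eq_sum_of_subset d (Finset.subset_union_left.trans Finset.subset_union_left)
      (Finset.subset_union_left.trans hS),
    herm_eq_sum_of_subset d (Finset.subset_union_left.trans Finset.subset_union_left)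
      (Finset.subset_union_right.trans hS),
    ← Finset.sum_add_distrib]
  refine Finset.sum_congr rfl fun α _ => ?_
  simp only [coeff_add]
  ring

lemma herm_monomial_monomial (s t : Fin n →₀ ℕ) (a b : ℂ) :
    herm d (monomial s a) (monomial t b) =
      if s = t then (starRingEnd ℂ) a * b * (mwt d s : ℂ) else 0 := by
  have hs : (monomial s a).support ⊆ {s, t} :=
    support_monomial_subset.trans (by simp)
  have ht : (monomial t b).support ⊆ {s, t} :=
    support_monomial_subset.trans (by simp)
  rw [herm_eq_sum_of_subset d hs ht]
  by_cases hst : s = t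
  · subst hst
    simp [coeff_monomial]
  · rw [Finset.sum_pair hst]
    simp [coeff_monomial, hst, Ne.symm hst]

lemma Hmat_eq_smul_one_of_herm_pderiv {f : MvPolynomial (Fin n) ℂ} (c : ℂ)
    (hf : (d : ℂ) * herm d f f ≠ 0)
    (h : ∀ i j, herm (d - 1) (pderiv j f) (pderiv i f) =
      if i = j then c * (d * herm d f f) else 0) :
    Hmat n d f = c • 1 := by
  ext i j
  rw [Hmat, h, Matrix.smul_apply, Matrix.one_apply]
  split_ifs
  · rw [smul_eq_mul, mul_one, one_div_mul_eq_div, mul_div_cancel_right₀ c hf]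
  · simp

end HermitianProduct

noncomputable section HessePencil

def exp3 (a b c : ℕ) : Fin 3 →₀ ℕ := single 0 a + single 1 b + single 2 c

@[simp] lemma exp3_apply_zero (a b c : ℕ) : exp3 a b c 0 = a := by simp [exp3]
@[simp] lemma exp3_apply_one (a b c : ℕ) : exp3 a b c 1 = b := by simp [exp3]
@[simp] lemma exp3_apply_two (a b c : ℕ) : exp3 a b c 2 = c := by simp [exp3]

@[simp] lemma exp3_inj {a b c a' b' c' : ℕ} :
    exp3 a b c = exp3 a' b' c' ↔ a = a' ∧ b = b' ∧ c = c' := by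
  refine ⟨fun h => ⟨?_, ?_, ?_⟩, fun ⟨ha, hb, hc⟩ => ha ▸ hb ▸ hc ▸ rfl⟩
  · simpa using DFunLike.congr_fun h 0
  · simpa using DFunLike.congr_fun h 1
  · simpa using DFunLike.congr_fun h 2

lemma single_zero_eq_exp3 (a : ℕ) : single 0 a = exp3 a 0 0 := by simp [exp3]
lemma single_one_eq_exp3 (b : ℕ) : single 1 b = exp3 0 b 0 := by simp [exp3]
lemma single_two_eq_exp3 (c : ℕ) : single 2 c = exp3 0 0 c := by simp [exp3]

lemma exp3_tsub (a b c a' b' c' : ℕ) :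
    exp3 a b c - exp3 a' b' c' = exp3 (a - a') (b - b') (c - c') := by
  ext j; fin_cases j <;> simp

lemma mwt_exp3 (d a b c : ℕ) :
    mwt d (exp3 a b c) = (a.factorial * b.factorial * c.factorial : ℝ) / d.factorial := by
  simp [mwt, Fin.prod_univ_three]

def hessePencil (l m : ℂ) : MvPolynomial (Fin 3) ℂ :=
  C l * (X 0 * X 1 * X 2) + C m * ((X 0) ^ 3 + (X 1) ^ 3 + (X 2) ^ 3)

lemma hessePencil_eq_sum_monomial (l m : ℂ) :
    hessePencil l m = monomial (exp3 1 1 1) l +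
      (monomial (exp3 3 0 0) m + monomial (exp3 0 3 0) m + monomial (exp3 0 0 3) m) := by
  simp [hessePencil, exp3, X, monomial_pow, monomial_mul, C_mul_monomial, mul_add]

variable (l m : ℂ)

lemma pderiv_zero_hessePencil :
    pderiv 0 (hessePencil l m) = monomial (exp3 0 1 1) l + monomial (exp3 2 0 0) (3 * m) := by
  simp [hessePencil_eq_sum_monomial, pderiv_monomial, single_zero_eq_exp3, exp3_tsub, mul_comm]

lemma pderiv_one_hessePencil :
    pderiv 1 (hessePencil l m) = monomial (exp3 1 0 1) l + monomial (exp3 0 2 0) (3 * m) := by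
  simp [hessePencil_eq_sum_monomial, pderiv_monomial, single_one_eq_exp3, exp3_tsub, mul_comm]

lemma pderiv_two_hessePencil :
    pderiv 2 (hessePencil l m) = monomial (exp3 1 1 0) l + monomial (exp3 0 0 2) (3 * m) := by
  simp [hessePencil_eq_sum_monomial, pderiv_monomial, single_two_eq_exp3, exp3_tsub, mul_comm]

lemma herm_self_hessePencil :
    herm 3 (hessePencil l m) (hessePencil l m) =
      ((Complex.normSq l / 6 + 3 * Complex.normSq m : ℝ) : ℂ) := by
  simp [hessePencil_eq_sum_monomial, herm_add_left, herm_add_right, herm_monomial_monomial,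
    mwt_exp3, Nat.factorial, Complex.normSq_eq_conj_mul_self]
  ring

lemma herm_pderiv_hessePencil (i j : Fin 3) :
    herm 2 (pderiv j (hessePencil l m)) (pderiv i (hessePencil l m)) =
      if i = j then 3 * herm 3 (hessePencil l m) (hessePencil l m) else 0 := by
  rw [herm_self_hessePencil]
  fin_cases i <;> fin_cases j <;>
    simp [pderiv_zero_hessePencil, pderiv_one_hessePencil, pderiv_two_hessePencil,
      herm_add_left, herm_add_right, herm_monomial_monomial, mwt_exp3, Nat.factorial,
      map_ofNat, Complex.normSq_eq_conj_mul_self] <;>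
    ring

lemma herm_self_hessePencil_ne_zero (h : ¬(l = 0 ∧ m = 0)) :
    herm 3 (hessePencil l m) (hessePencil l m) ≠ 0 := by
  rw [herm_self_hessePencil, Complex.ofReal_ne_zero]
  intro h0
  have hl := Complex.normSq_nonneg l
  have hm := Complex.normSq_nonneg m
  exact h ⟨Complex.normSq_eq_zero.mp (by linarith), Complex.normSq_eq_zero.mp (by linarith)⟩

end HessePencil

/-- For all λ, μ ∈ ℂ not both zero, λ·xyz + μ·(x³+y³+z³) has moment matrix 0. -/
theorem stmt8 (l m : ℂ) (h : ¬(l = 0 ∧ m = 0)) :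
    moment 3 3 (C l * (X 0 * X 1 * X 2) +
      C m * ((X 0)^3 + (X 1)^3 + (X 2)^3) : MvPolynomial (Fin 3) ℂ) = 0 := by
  change moment 3 3 (hessePencil l m) = 0
  have hnorm := herm_self_hessePencil_ne_zero l m h
  have hH : Hmat 3 3 (hessePencil l m) = (1 : ℂ) • 1 :=
    Hmat_eq_smul_one_of_herm_pderiv 3 1 (mul_ne_zero three_ne_zero hnorm) fun i j => by
      rw [herm_pderiv_hessePencil, one_mul, Nat.cast_ofNat]
  rw [moment, hH]
  norm_num
end

section
/- The moment matrix of f = y²z + x²z ∈ Sym^3(ℂ³)^∨ is diagonal, and f is a critical point of the square-length function ‖m‖², i.e., the gradient of ‖m(·)‖² with respect to the 10 real coefficients of a general real cubic vanishes at f. -/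
open MvPolynomial Matrix

namespace Stmt10Aux

open Finsupp Complex

noncomputable section

/-! ### Generalities: real-coefficient polynomials give real symmetric moment
matrices, hence nonnegative square length. -/

/-- realness predicate: the polynomial is fixed by coefficientwise conjugation -/
def Rl {n : ℕ} (g : MvPolynomial (Fin n) ℂ) : Prop :=
  MvPolynomial.map (starRingEnd ℂ) g = g

lemma Rl.coeff' {n : ℕ} {g : MvPolynomial (Fin n) ℂ} (h : Rl g) (β : Fin n →₀ ℕ) :
    (starRingEnd ℂ) (coeff β g) = coeff β g := by
  conv_rhs => rw [← h, coeff_map]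

lemma Rl.pderiv' {n : ℕ} {g : MvPolynomial (Fin n) ℂ} (h : Rl g) (j : Fin n) :
    Rl (pderiv j g) := by
  unfold Rl
  rw [← pderiv_map]
  unfold Rl at h
  rw [h]

lemma herm_conj {n d : ℕ} {f g : MvPolynomial (Fin n) ℂ} (hf : Rl f) (hg : Rl g) :
    (starRingEnd ℂ) (herm d f g) = herm d f g := by
  unfold herm
  rw [map_sum]
  refine Finset.sum_congr rfl fun α _ => ?_
  simp only [_root_.map_mul, Complex.conj_conj, Complex.conj_ofReal,
    hf.coeff' α, hg.coeff' α]

lemma herm_comm {n d : ℕ} {f g : MvPolynomial (Fin n) ℂ} (hf : Rl f) (hg : Rl g) :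
    herm d f g = herm d g f := by
  unfold herm
  rw [Finset.union_comm]
  refine Finset.sum_congr rfl fun α _ => ?_
  rw [hf.coeff' α, hg.coeff' α]
  ring

lemma moment_conj {n d : ℕ} {g : MvPolynomial (Fin n) ℂ} (hg : Rl g) (i j : Fin n) :
    (starRingEnd ℂ) (moment n d g i j) = moment n d g i j := by
  have h1 := herm_conj (d := d) hg hg
  have h2 := herm_conj (d := d - 1) (hg.pderiv' j) (hg.pderiv' i)
  simp only [moment, Hmat, Matrix.smul_apply, Matrix.sub_apply,
    Matrix.one_apply, smul_eq_mul, _root_.map_mul, map_sub, map_div₀,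
    _root_.map_one, map_natCast, map_ofNat, apply_ite (starRingEnd ℂ),
    map_zero, h1, h2]

lemma moment_symm {n d : ℕ} {g : MvPolynomial (Fin n) ℂ} (hg : Rl g) (i j : Fin n) :
    moment n d g i j = moment n d g j i := by
  simp only [moment, Hmat, Matrix.smul_apply, Matrix.sub_apply, Matrix.one_apply,
    smul_eq_mul]
  rw [herm_comm (hg.pderiv' j) (hg.pderiv' i)]
  congr 2
  simp [eq_comm]

lemma sqLen_nonneg {n d : ℕ} {g : MvPolynomial (Fin n) ℂ} (hg : Rl g) :
    0 ≤ sqLen n d g := by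
  unfold sqLen
  rw [Matrix.trace]
  simp only [Matrix.diag, Matrix.mul_apply]
  rw [Complex.re_sum]
  refine Finset.sum_nonneg fun i _ => ?_
  rw [Complex.re_sum]
  refine Finset.sum_nonneg fun j _ => ?_
  rw [← moment_symm hg i j, Complex.mul_re]
  have him : (moment n d g i j).im = 0 :=
    Complex.conj_eq_iff_im.mp (moment_conj hg i j)
  rw [him]
  simpa using mul_self_nonneg (moment n d g i j).re

/-! ### herm as a sum over any superset of the supports, and explicit values -/

lemma herm_eq_sum {n d : ℕ} {f g : MvPolynomial (Fin n) ℂ} {S : Finset (Fin n →₀ ℕ)}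
    (hS : f.support ∪ g.support ⊆ S) :
    herm d f g = ∑ α ∈ S,
      (starRingEnd ℂ) (coeff α f) * coeff α g * (mwt d α : ℂ) := by
  unfold herm
  refine Finset.sum_subset hS fun α _ hα => ?_
  rw [Finset.mem_union, not_or] at hα
  rw [MvPolynomial.notMem_support_iff.mp hα.1]
  simp

lemma herm_add_left {n d : ℕ} (f₁ f₂ g : MvPolynomial (Fin n) ℂ) :
    herm d (f₁ + f₂) g = herm d f₁ g + herm d f₂ g := by
  have h1 : (f₁ + f₂).support ∪ g.support ⊆ (f₁.support ∪ f₂.support) ∪ g.support :=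
    Finset.union_subset_union_left MvPolynomial.support_add
  have h2 : f₁.support ∪ g.support ⊆ (f₁.support ∪ f₂.support) ∪ g.support :=
    Finset.union_subset_union_left Finset.subset_union_left
  have h3 : f₂.support ∪ g.support ⊆ (f₁.support ∪ f₂.support) ∪ g.support :=
    Finset.union_subset_union_left Finset.subset_union_right
  rw [herm_eq_sum h1, herm_eq_sum h2, herm_eq_sum h3, ← Finset.sum_add_distrib]
  refine Finset.sum_congr rfl fun α _ => ?_
  rw [MvPolynomial.coeff_add, map_add]
  ring

lemma herm_add_right {n d : ℕ} (f g₁ g₂ : MvPolynomial (Fin n) ℂ) :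
    herm d f (g₁ + g₂) = herm d f g₁ + herm d f g₂ := by
  have h1 : f.support ∪ (g₁ + g₂).support ⊆ f.support ∪ (g₁.support ∪ g₂.support) :=
    Finset.union_subset_union_right MvPolynomial.support_add
  have h2 : f.support ∪ g₁.support ⊆ f.support ∪ (g₁.support ∪ g₂.support) :=
    Finset.union_subset_union_right Finset.subset_union_left
  have h3 : f.support ∪ g₂.support ⊆ f.support ∪ (g₁.support ∪ g₂.support) :=
    Finset.union_subset_union_right Finset.subset_union_right
  rw [herm_eq_sum h1, herm_eq_sum h2, herm_eq_sum h3, ← Finset.sum_add_distrib]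
  refine Finset.sum_congr rfl fun α _ => ?_
  rw [MvPolynomial.coeff_add]
  ring

lemma herm_mono_ne {d : ℕ} {a b : Fin 3 →₀ ℕ} {c e : ℂ} (h : a ≠ b) :
    herm d (monomial a c) (monomial b e) = 0 := by
  rw [herm_eq_sum (S := ({a, b} : Finset (Fin 3 →₀ ℕ)))
    (Finset.union_subset (support_monomial_subset.trans (by simp))
      (support_monomial_subset.trans (by simp))),
    Finset.sum_pair h]
  simp [coeff_monomial, h, h.symm]

lemma herm_mono_eq {d : ℕ} {a : Fin 3 →₀ ℕ} {c e : ℂ} :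
    herm d (monomial a c) (monomial a e) = (starRingEnd ℂ) c * e * (mwt d a : ℂ) := by
  rw [herm_eq_sum (S := ({a} : Finset (Fin 3 →₀ ℕ)))
    (Finset.union_subset support_monomial_subset support_monomial_subset),
    Finset.sum_singleton]
  simp [coeff_monomial]

lemma herm_mono {d : ℕ} {a b : Fin 3 →₀ ℕ} {c e : ℂ} :
    herm d (monomial a c) (monomial b e) =
      if a = b then (starRingEnd ℂ) c * e * (mwt d a : ℂ) else 0 := by
  by_cases h : a = b
  · subst h; simp [herm_mono_eq]
  · simp [herm_mono_ne h, h]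

/-! ### explicit exponent vectors and computations for f = y²z + x²z -/

def E (a b c : ℕ) : Fin 3 →₀ ℕ := single 0 a + single 1 b + single 2 c

lemma E_apply0 (a b c : ℕ) : E a b c 0 = a := by simp [E, Finsupp.single_apply]
lemma E_apply1 (a b c : ℕ) : E a b c 1 = b := by simp [E, Finsupp.single_apply]
lemma E_apply2 (a b c : ℕ) : E a b c 2 = c := by simp [E, Finsupp.single_apply]

lemma E_eq_iff {a b c a' b' c' : ℕ} :
    E a b c = E a' b' c' ↔ a = a' ∧ b = b' ∧ c = c' := by
  constructor
  · intro h
    exact ⟨by simpa [E_apply0] using DFunLike.congr_fun h 0,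
      by simpa [E_apply1] using DFunLike.congr_fun h 1,
      by simpa [E_apply2] using DFunLike.congr_fun h 2⟩
  · rintro ⟨rfl, rfl, rfl⟩; rfl

lemma mwt_E (d a b c : ℕ) :
    mwt d (E a b c) = (a.factorial * b.factorial * c.factorial : ℝ) / d.factorial := by
  unfold mwt
  rw [Fin.prod_univ_three, E_apply0, E_apply1, E_apply2]

lemma E_sub0 (a b c : ℕ) : E a b c - single 0 1 = E (a-1) b c := by
  ext i; fin_cases i <;> simp [E, Finsupp.single_apply]
lemma E_sub1 (a b c : ℕ) : E a b c - single 1 1 = E a (b-1) c := by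
  ext i; fin_cases i <;> simp [E, Finsupp.single_apply]
lemma E_sub2 (a b c : ℕ) : E a b c - single 2 1 = E a b (c-1) := by
  ext i; fin_cases i <;> simp [E, Finsupp.single_apply]

def fm : MvPolynomial (Fin 3) ℂ := monomial (E 0 2 1) 1 + monomial (E 2 0 1) 1

lemma Es1 : (single 1 2 + single 2 1 : Fin 3 →₀ ℕ) = E 0 2 1 := by
  ext i; fin_cases i <;> simp [E, Finsupp.single_apply]
lemma Es2 : (single 0 2 + single 2 1 : Fin 3 →₀ ℕ) = E 2 0 1 := by
  ext i; fin_cases i <;> simp [E, Finsupp.single_apply]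

lemma f_eq : ((X 1)^2 * X 2 + (X 0)^2 * X 2 : MvPolynomial (Fin 3) ℂ) = fm := by
  rw [fm, X_pow_eq_monomial, X_pow_eq_monomial,
    show (X 2 : MvPolynomial (Fin 3) ℂ) = monomial (single 2 1) 1 from rfl,
    monomial_mul, monomial_mul, Es1, Es2, one_mul]

def pd : Fin 3 → MvPolynomial (Fin 3) ℂ :=
  ![monomial (E 1 0 1) 2, monomial (E 0 1 1) 2,
    monomial (E 0 2 0) 1 + monomial (E 2 0 0) 1]

lemma pderiv0_f : pderiv (0 : Fin 3) fm = monomial (E 1 0 1) 2 := by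
  rw [fm, map_add, pderiv_monomial, pderiv_monomial, E_sub0, E_sub0, E_apply0, E_apply0]
  norm_num

lemma pderiv1_f : pderiv (1 : Fin 3) fm = monomial (E 0 1 1) 2 := by
  rw [fm, map_add, pderiv_monomial, pderiv_monomial, E_sub1, E_sub1, E_apply1, E_apply1]
  norm_num

lemma pderiv2_f : pderiv (2 : Fin 3) fm = monomial (E 0 2 0) 1 + monomial (E 2 0 0) 1 := by
  rw [fm, map_add, pderiv_monomial, pderiv_monomial, E_sub2, E_sub2, E_apply2, E_apply2]
  norm_num

lemma pderiv_fm (i : Fin 3) : pderiv i fm = pd i := by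
  fin_cases i
  · exact pderiv0_f
  · exact pderiv1_f
  · exact pderiv2_f

lemma herm_ff : herm 3 fm fm = 2/3 := by
  rw [fm, herm_add_left, herm_add_right, herm_add_right]
  simp [herm_mono, E_eq_iff, mwt_E, Nat.factorial]
  norm_num

lemma herm_pd (i j : Fin 3) : herm 2 (pd j) (pd i) = if i = j then 2 else 0 := by
  fin_cases i <;> fin_cases j <;>
    simp [pd, herm_add_left, herm_add_right, herm_mono, E_eq_iff, mwt_E,
      Nat.factorial, map_ofNat] <;> norm_num

lemma moment_f_eq_zero : moment 3 3 fm = 0 := by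
  ext i j
  simp only [moment, Hmat, Matrix.smul_apply, Matrix.sub_apply,
    Matrix.one_apply, Matrix.zero_apply, smul_eq_mul, herm_ff, pderiv_fm,
    Nat.reduceSub, herm_pd]
  split <;> norm_num

lemma Rl_perturb (α : Fin 3 →₀ ℕ) (t : ℝ) : Rl (fm + (t : ℂ) • monomial α 1) := by
  unfold Rl fm
  rw [smul_monomial, smul_eq_mul, mul_one]
  simp [MvPolynomial.map_monomial, Complex.conj_ofReal]

end

end Stmt10Aux

/-- f = y²z + x²z has diagonal moment matrix and is a critical point of the
square-length of the moment map: all partial derivatives with respect to the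
10 real coefficients of a general real cubic vanish at f. -/
theorem stmt10 :
    (moment 3 3 ((X 1)^2 * X 2 + (X 0)^2 * X 2 : MvPolynomial (Fin 3) ℂ)).IsDiag ∧
    ∀ α : Fin 3 →₀ ℕ, (α.sum fun _ e => e) = 3 →
      deriv (fun t : ℝ =>
        sqLen 3 3 (((X 1)^2 * X 2 + (X 0)^2 * X 2 : MvPolynomial (Fin 3) ℂ)
          + (t : ℂ) • monomial α 1)) 0 = 0 := by
  constructor
  · rw [Stmt10Aux.f_eq, Stmt10Aux.moment_f_eq_zero]
    exact Matrix.isDiag_zero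
  · intro α _
    have h0 : sqLen 3 3 (((X 1)^2 * X 2 + (X 0)^2 * X 2 : MvPolynomial (Fin 3) ℂ)
        + ((0 : ℝ) : ℂ) • monomial α 1) = 0 := by
      rw [Complex.ofReal_zero, zero_smul, add_zero, Stmt10Aux.f_eq]
      unfold sqLen
      rw [Stmt10Aux.moment_f_eq_zero]
      simp
    have hmin : IsLocalMin (fun t : ℝ =>
        sqLen 3 3 (((X 1)^2 * X 2 + (X 0)^2 * X 2 : MvPolynomial (Fin 3) ℂ)
          + (t : ℂ) • monomial α 1)) 0 := by
      refine Filter.Eventually.of_forall fun t => ?_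
      simp only [h0]
      rw [Stmt10Aux.f_eq]
      exact Stmt10Aux.sqLen_nonneg (Stmt10Aux.Rl_perturb α t)
    exact hmin.deriv_eq_zero
end
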